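/- Let r ≥ 1 be an integer and work in the ring ℚ[[x_1, …, x_r]] of formal power series in r variables over ℚ. Let E_i = ∑_{n≥0} x_i^n / n! be the formal exponential of x_i, and for 0 ≤ p ≤ r let e_p denote the p-th elementary symmetric polynomial in r variables. Then the power series F = ∑_{p=0}^{r} (-1)^p · p · e_p(E_1, …, E_r) satisfies: every homogeneous component of F of total degree strictly less than r−1 vanishes, and the homogeneous component of F of total degree r−1 equals (-1)^r · e_{r-1}(x_1, …, x_r). -/

import Mathlib

/-!
Double counting pairs `i ∈ S` turns `∑_S (-1)^|S| |S| ∏_{i ∈ S} y_i` into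
`-∑_i y_i ∏_{j ≠ i} (1 - y_j)`. For `y = E`, each `1 - E_j` is `x_j` times a series with constant
coefficient `-1`, so the `i`-th summand is the monomial `∏_{j ≠ i} x_j` times a series with constant
coefficient `(-1)^r`. In degree `≤ r - 1` only that monomial itself survives, and these monomials
add up to `e_{r-1}`.
-/

open MvPowerSeries Finset

/-- The formal exponential `E_i = ∑_{n ≥ 0} x_i^n / n!` of the `i`-th variable,
as a multivariate formal power series over `ℚ`. -/
noncomputable def formalExpVar (r : ℕ) (i : Fin r) : MvPowerSeries (Fin r) ℚ :=
  fun m => if m = Finsupp.single i (m i) then (1 : ℚ) / Nat.factorial (m i) else 0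

section PowersetSums

variable {ι R : Type*} [CommRing R] [DecidableEq ι]

theorem Finset.prod_one_sub_eq_sum_powerset (s : Finset ι) (y : ι → R) :
    ∏ j ∈ s, (1 - y j) = ∑ t ∈ s.powerset, (-1) ^ #t * ∏ j ∈ t, y j := by
  simp [prod_sub]

theorem Finset.sum_powerset_filter_mem_neg_one_pow_mul_prod {s : Finset ι} {i : ι} (hi : i ∈ s)
    (y : ι → R) :
    ∑ t ∈ s.powerset with i ∈ t, (-1) ^ #t * ∏ j ∈ t, y j =
      -(y i * ∏ j ∈ s.erase i, (1 - y j)) := by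
  have hi' : i ∉ s.erase i := notMem_erase i s
  calc ∑ t ∈ s.powerset with i ∈ t, (-1) ^ #t * ∏ j ∈ t, y j
      = ∑ t ∈ (insert i (s.erase i)).powerset,
          if i ∈ t then (-1) ^ #t * ∏ j ∈ t, y j else 0 := by
        rw [sum_filter, insert_erase hi]
    _ = ∑ t ∈ (s.erase i).powerset, (-1) ^ (#t + 1) * (y i * ∏ j ∈ t, y j) := by
        rw [sum_powerset_insert hi',
          sum_eq_zero fun t ht => if_neg fun h => hi' (mem_powerset.1 ht h), zero_add]
        refine sum_congr rfl fun t ht => ?_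
        have hit : i ∉ t := fun h => hi' (mem_powerset.1 ht h)
        rw [if_pos (mem_insert_self i t), card_insert_of_notMem hit, prod_insert hit]
    _ = -(y i * ∏ j ∈ s.erase i, (1 - y j)) := by
        rw [prod_one_sub_eq_sum_powerset, mul_sum, ← sum_neg_distrib]
        exact sum_congr rfl fun t _ => by ring

theorem Finset.sum_powerset_neg_one_pow_mul_card_mul_prod (s : Finset ι) (y : ι → R) :
    ∑ t ∈ s.powerset, (-1) ^ #t * #t * ∏ j ∈ t, y j =
      -∑ i ∈ s, y i * ∏ j ∈ s.erase i, (1 - y j) := by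
  calc ∑ t ∈ s.powerset, (-1) ^ #t * #t * ∏ j ∈ t, y j
      = ∑ t ∈ s.powerset, ∑ i ∈ s, if i ∈ t then (-1) ^ #t * ∏ j ∈ t, y j else 0 := by
        refine sum_congr rfl fun t ht => ?_
        rw [sum_ite_mem, inter_eq_right.2 (mem_powerset.1 ht), sum_const, nsmul_eq_mul]
        ring
    _ = ∑ i ∈ s, ∑ t ∈ s.powerset with i ∈ t, (-1) ^ #t * ∏ j ∈ t, y j := by
        rw [sum_comm]
        simp_rw [sum_filter]
    _ = -∑ i ∈ s, y i * ∏ j ∈ s.erase i, (1 - y j) := by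
        rw [← sum_neg_distrib]
        exact sum_congr rfl fun i hi => sum_powerset_filter_mem_neg_one_pow_mul_prod hi y

end PowersetSums

namespace MvPolynomial

theorem sum_range_neg_one_pow_mul_smul_aeval_esymm {σ R A : Type*} [Fintype σ] [DecidableEq σ]
    [CommRing R] [CommRing A] [Algebra R A] (y : σ → A) :
    ∑ p ∈ range (Fintype.card σ + 1), ((-1 : R) ^ p * p) • aeval y (esymm σ R p) =
      -∑ i, y i * ∏ j ∈ univ.erase i, (1 - y j) := by
  rw [← sum_powerset_neg_one_pow_mul_card_mul_prod, sum_powerset, card_univ]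
  refine sum_congr rfl fun p _ => ?_
  simp_rw [esymm, map_sum, map_prod, aeval_X, smul_sum]
  refine sum_congr rfl fun t ht => ?_
  rw [(mem_powersetCard.1 ht).2, Algebra.smul_def]
  simp

theorem isHomogeneous_esymm {σ R : Type*} [Fintype σ] [CommSemiring R] (n : ℕ) :
    (esymm σ R n).IsHomogeneous n := by
  refine IsHomogeneous.sum _ _ _ fun t ht => ?_
  simpa [(mem_powersetCard.1 ht).2] using
    IsHomogeneous.prod t (fun i => X i) (fun _ => 1) fun i _ => isHomogeneous_X R i

theorem esymm_card_sub_one {σ R : Type*} [Fintype σ] [DecidableEq σ] [Nonempty σ]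
    [CommSemiring R] :
    esymm σ R (Fintype.card σ - 1) =
      ∑ i, monomial (∑ j ∈ univ.erase i, Finsupp.single j 1) 1 := by
  rw [esymm_eq_sum_monomial]
  symm
  refine sum_bij (fun i _ => univ.erase i) (fun i _ => ?_)
    (fun i _ j _ h => (erase_inj _ (mem_univ i)).1 h) (fun t ht => ?_) fun _ _ => rfl
  · simp [mem_powersetCard, card_erase_of_mem]
  · have hc : #tᶜ = 1 := by
      rw [card_compl, (mem_powersetCard.1 ht).2]
      have := Fintype.card_pos (α := σ)
      omega
    obtain ⟨i, hi⟩ := card_eq_one.1 hc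
    exact ⟨i, mem_univ i, by rw [← compl_singleton, ← hi, compl_compl]⟩

end MvPolynomial

theorem Finsupp.eq_of_le_of_degree_le {σ : Type*} {a m : σ →₀ ℕ} (hle : a ≤ m)
    (hdeg : m.degree ≤ a.degree) : a = m := by
  have hsub : (m - a).degree = 0 := by
    have := congrArg degree (tsub_add_cancel_of_le hle)
    rw [map_add] at this
    omega
  rw [degree_eq_zero_iff, tsub_eq_zero_iff_le] at hsub
  exact le_antisymm hle hsub

namespace MvPowerSeries

variable {σ R : Type*} [CommSemiring R]

theorem coeff_monomial_mul_of_degree_le {a m : σ →₀ ℕ} (h : m.degree ≤ a.degree) (c : R)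
    (φ : MvPowerSeries σ R) :
    coeff m (monomial a c * φ) = coeff m (monomial a c) * constantCoeff φ := by
  classical
  rw [coeff_monomial_mul, coeff_monomial]
  by_cases hma : m = a
  · subst hma
    simp
  · have hle : ¬a ≤ m := fun hle => hma (Finsupp.eq_of_le_of_degree_le hle h).symm
    rw [if_neg hle, if_neg hma, zero_mul]

theorem prod_X_eq_monomial (s : Finset σ) :
    ∏ j ∈ s, (X j : MvPowerSeries σ R) = monomial (∑ j ∈ s, Finsupp.single j 1) 1 := by
  simp [X_def, prod_monomial]

theorem coeff_sum_monomial_erase_mul_of_degree_le [Fintype σ] [DecidableEq σ] [Nonempty σ]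
    {H : σ → MvPowerSeries σ R} {c : R} (hH : ∀ i, constantCoeff (H i) = c) {m : σ →₀ ℕ}
    (hm : m.degree ≤ Fintype.card σ - 1) :
    coeff m (∑ i, monomial (∑ j ∈ univ.erase i, Finsupp.single j 1) 1 * H i) =
      c * MvPolynomial.coeff m (MvPolynomial.esymm σ R (Fintype.card σ - 1)) := by
  rw [MvPolynomial.esymm_card_sub_one, MvPolynomial.coeff_sum, map_sum, mul_sum]
  refine sum_congr rfl fun i _ => ?_
  rw [coeff_monomial_mul_of_degree_le, hH, ← MvPolynomial.coe_monomial, MvPolynomial.coeff_coe,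
    mul_comm]
  simpa [card_erase_of_mem] using hm

end MvPowerSeries

theorem coeff_formalExpVar (r : ℕ) (i : Fin r) (m : Fin r →₀ ℕ) :
    coeff m (formalExpVar r i) =
      if m = Finsupp.single i (m i) then (1 : ℚ) / Nat.factorial (m i) else 0 :=
  rfl

theorem constantCoeff_formalExpVar (r : ℕ) (i : Fin r) :
    constantCoeff (formalExpVar r i) = 1 := by
  rw [← coeff_zero_eq_constantCoeff_apply, coeff_formalExpVar]
  simp

theorem exists_one_sub_formalExpVar_eq_X_mul (r : ℕ) (i : Fin r) :
    ∃ G : MvPowerSeries (Fin r) ℚ, constantCoeff G = -1 ∧ 1 - formalExpVar r i = X i * G := by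
  obtain ⟨G, hG⟩ : X i ∣ 1 - formalExpVar r i := by
    refine X_dvd_iff.2 fun m hm => ?_
    rw [map_sub, coeff_formalExpVar, hm, coeff_one]
    by_cases h0 : m = 0 <;> simp [h0]
  refine ⟨G, ?_, hG⟩
  have := congrArg (coeff (Finsupp.single i 1)) hG
  rw [X_def, coeff_monomial_mul, map_sub, coeff_formalExpVar] at this
  simpa [coeff_one] using this.symm

theorem exists_sum_esymm_formalExpVar_eq_sum_monomial_mul (r : ℕ) (hr : 1 ≤ r) :
    ∃ H : Fin r → MvPowerSeries (Fin r) ℚ, (∀ i, constantCoeff (H i) = (-1) ^ r) ∧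
      ∑ p ∈ range (r + 1), ((-1 : ℚ) ^ p * p) •
          MvPolynomial.aeval (formalExpVar r) (MvPolynomial.esymm (Fin r) ℚ p) =
        ∑ i, monomial (∑ j ∈ univ.erase i, Finsupp.single j 1) 1 * H i := by
  choose G hG₀ hG using exists_one_sub_formalExpVar_eq_X_mul r
  refine ⟨fun i => -(formalExpVar r i * ∏ j ∈ univ.erase i, G j), fun i => ?_, ?_⟩
  · simp only [map_neg, map_mul, map_prod, hG₀, constantCoeff_formalExpVar, prod_const,
      card_erase_of_mem (mem_univ i), card_univ, Fintype.card_fin]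
    rw [one_mul, ← neg_one_mul, ← pow_succ', Nat.sub_add_cancel hr]
  · have h := MvPolynomial.sum_range_neg_one_pow_mul_smul_aeval_esymm (R := ℚ) (formalExpVar r)
    rw [Fintype.card_fin] at h
    rw [h, ← sum_neg_distrib]
    refine sum_congr rfl fun i _ => ?_
    simp_rw [hG, prod_mul_distrib, prod_X_eq_monomial]
    ring

/-- Symmetric-function identity ("standard computation of Chern classes") used
in the proof of Proposition 2.9: the series
`F = ∑_{p=0}^{r} (-1)^p p · e_p(E_1, …, E_r)` (with `E_i = exp x_i`) has all its
homogeneous components of total degree `< r-1` equal to zero, and its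
homogeneous component of total degree `r-1` equals `(-1)^r e_{r-1}(x_1,…,x_r)`. -/
theorem esymm_exp_lowest_term (r : ℕ) (hr : 1 ≤ r) :
    (∀ m : Fin r →₀ ℕ, (m.sum fun _ e => e) < r - 1 →
      MvPowerSeries.coeff m
        (∑ p ∈ Finset.range (r + 1), ((-1 : ℚ) ^ p * p) •
          MvPolynomial.aeval (formalExpVar r) (MvPolynomial.esymm (Fin r) ℚ p)) = 0) ∧
    (∀ m : Fin r →₀ ℕ, (m.sum fun _ e => e) = r - 1 →
      MvPowerSeries.coeff m
        (∑ p ∈ Finset.range (r + 1), ((-1 : ℚ) ^ p * p) •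
          MvPolynomial.aeval (formalExpVar r) (MvPolynomial.esymm (Fin r) ℚ p)) =
        (-1 : ℚ) ^ r * MvPolynomial.coeff m (MvPolynomial.esymm (Fin r) ℚ (r - 1))) := by
  obtain ⟨H, hH, hF⟩ := exists_sum_esymm_formalExpVar_eq_sum_monomial_mul r hr
  have : Nonempty (Fin r) := ⟨⟨0, hr⟩⟩
  have hlow := fun m : Fin r →₀ ℕ => coeff_sum_monomial_erase_mul_of_degree_le (m := m) hH
  simp only [Fintype.card_fin] at hlow
  rw [hF]
  refine ⟨fun m hm => ?_, fun m hm => hlow m hm.le⟩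
  rw [hlow m hm.le, (MvPolynomial.isHomogeneous_esymm _).coeff_eq_zero hm.ne, mul_zero]
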